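/- Suppose r ≥ q. For every a ∈ N_{r+1} and every A ⊆ supp(a) there exists i ∈ {0,1,…,q} such that a − f_i ∈ N_r and A ⊆ supp(a − f_i); consequently, every cube C̄(a,A) of Ḡ^{r+1} is the translate C̄(a − f_i, A) + φ(f_i) of a cube of Ḡ^r, so that Ḡ^{r+1} = ∪_{j=0}^{q} t_j(Ḡ^r), where t_j is the translation of ℝ^q by the vector φ(f_j). -/
import Mathlib


open Finset

/-- The standard basis vector `f_i` of `ℤ_{≥0}^{q+1}` (as a function `ℕ → ℕ`). -/
def fvec (i : ℕ) : ℕ → ℕ := fun j => if j = i then 1 else 0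

/-- `a ∈ N_r`: a vector in `ℤ_{≥0}^{q+1}` whose coordinates sum to `r`. -/
def Nr (q r : ℕ) (a : ℕ → ℕ) : Prop :=
  (∀ j, q < j → a j = 0) ∧ ∑ j ∈ Finset.range (q + 1), a j = r

/-- `e_i` lies on the unique path from `v_0` to `v_j`, i.e. `i ∈ {j, τ(j), τ²(j), …}`. -/
def onPath (τ : ℕ → ℕ) (i j : ℕ) : Prop := ∃ k : ℕ, τ^[k] j = i

open Classical in
/-- The matrix `Φ(G)` (rows and columns indexed by `1, …, q`). -/
noncomputable def Phi (q : ℕ) (τ : ℕ → ℕ) : Matrix (Fin q) (Fin q) ℝ :=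
  Matrix.of fun i j => if onPath τ (i.1 + 1) (j.1 + 1) then 1 else 0

/-- The embedding `φ : ℤ_{≥0}^{q+1} → ℝ^q`, `φ(a) = Φ(G)·(a_1, …, a_q)ᵀ`. -/
noncomputable def phi (q : ℕ) (τ : ℕ → ℕ) (a : ℕ → ℕ) : Fin q → ℝ :=
  (Phi q τ).mulVec fun j => (a (j.1 + 1) : ℝ)

/-- The standard basis vector `e_i` of `ℝ^q` (for `i ∈ {1,…,q}`). -/
def evec (q : ℕ) (i : ℕ) : Fin q → ℝ := fun j => if j.1 + 1 = i then 1 else 0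

/-- The support `supp(a) = {j ∈ {1,…,q} : a_j ≠ 0}`. -/
def suppv (q : ℕ) (a : ℕ → ℕ) : Finset ℕ := (Finset.Icc 1 q).filter (fun j => a j ≠ 0)

/-- `b − Σ_{i∈C'}(f_i − f_{τ(i)})` (valid in `ℕ` whenever `C' ⊆ supp(b)`). -/
def moveSet (τ : ℕ → ℕ) (b : ℕ → ℕ) (C' : Finset ℕ) : ℕ → ℕ :=
  fun j => b j + (∑ i ∈ C', fvec (τ i) j) - ∑ i ∈ C', fvec i j

/-- The solid cube `C̄(b,B) = {φ(b) − Σ_{i∈B} t_i e_i : t_i ∈ [0,1]} ⊆ ℝ^q`. -/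
noncomputable def cubeSet (q : ℕ) (τ : ℕ → ℕ) (b : ℕ → ℕ) (B : Finset ℕ) :
    Set (Fin q → ℝ) :=
  {x | ∃ t : ℕ → ℝ, (∀ i ∈ B, t i ∈ Set.Icc (0 : ℝ) 1) ∧
    x = phi q τ b - ∑ i ∈ B, t i • evec q i}

/-- The collection `Ḡ^r` of all solid cubes `C̄(b,B)`, `b ∈ N_r`, `B ⊆ supp(b)`. -/
noncomputable def GrBar (q : ℕ) (τ : ℕ → ℕ) (r : ℕ) : Set (Set (Fin q → ℝ)) :=
  {s | ∃ b B, Nr q r b ∧ B ⊆ suppv q b ∧ s = cubeSet q τ b B}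


lemma phi_add' (q : ℕ) (τ : ℕ → ℕ) (b c : ℕ → ℕ) :
    phi q τ (fun j => b j + c j) = phi q τ b + phi q τ c := by
  unfold phi
  rw [show (fun j : Fin q => ((b (j.1+1) + c (j.1+1) : ℕ) : ℝ))
      = (fun j : Fin q => (b (j.1+1) : ℝ)) + fun j : Fin q => (c (j.1+1) : ℝ) from by
    funext j; push_cast; rfl, Matrix.mulVec_add]

lemma cube_translate' (q : ℕ) (τ : ℕ → ℕ) (b : ℕ → ℕ) (i : ℕ) (B : Finset ℕ) :
    cubeSet q τ (fun j => b j + fvec i j) B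
      = (fun x => x + phi q τ (fvec i)) '' cubeSet q τ b B := by
  ext x
  simp only [cubeSet, Set.mem_image, Set.mem_setOf_eq]
  constructor
  · rintro ⟨t, ht, rfl⟩
    exact ⟨phi q τ b - ∑ i ∈ B, t i • evec q i, ⟨t, ht, rfl⟩, by rw [phi_add']; abel⟩
  · rintro ⟨y, ⟨t, ht, rfl⟩, rfl⟩
    exact ⟨t, ht, by rw [phi_add']; abel⟩

/-- if `r ≥ q` then for every `a ∈ N_{r+1}` and `A ⊆ supp(a)` there is
`i ∈ {0,…,q}` with `a − f_i ∈ N_r`, `A ⊆ supp(a − f_i)` and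
`C̄(a,A) = C̄(a − f_i, A) + φ(f_i)`; consequently
`Ḡ^{r+1} = ⋃_{j=0}^{q} t_j(Ḡ^r)`, where `t_j` is translation by `φ(f_j)`. -/
theorem statement18 (q : ℕ) (hq : 1 ≤ q) (τ : ℕ → ℕ)
    (hτ : ∀ i, 1 ≤ i → i ≤ q → τ i < i) (r : ℕ) (hrq : q ≤ r) :
    (∀ a : ℕ → ℕ, ∀ A : Finset ℕ, Nr q (r + 1) a → A ⊆ suppv q a →
      ∃ i ≤ q, 1 ≤ a i ∧ Nr q r (fun j => a j - fvec i j) ∧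
        A ⊆ suppv q (fun j => a j - fvec i j) ∧
        cubeSet q τ a A
          = (fun x => x + phi q τ (fvec i)) '' cubeSet q τ (fun j => a j - fvec i j) A) ∧
    GrBar q τ (r + 1)
      = ⋃ i ∈ Finset.range (q + 1),
          (Set.image (fun x => x + phi q τ (fvec i))) '' GrBar q τ r := by
  classical
  have key : ∀ a : ℕ → ℕ, ∀ A : Finset ℕ, Nr q (r + 1) a → A ⊆ suppv q a →
      ∃ i ≤ q, 1 ≤ a i ∧ Nr q r (fun j => a j - fvec i j) ∧
        A ⊆ suppv q (fun j => a j - fvec i j) ∧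
        cubeSet q τ a A
          = (fun x => x + phi q τ (fvec i)) '' cubeSet q τ (fun j => a j - fvec i j) A := by
    intro a A hN hA
    obtain ⟨hz, hs⟩ := hN
    -- choose the index i
    have hexist : ∃ i ≤ q, 1 ≤ a i ∧ ∀ j ∈ A, (a j - fvec i j) ≠ 0 := by
      by_cases h2 : ∃ i, i ≤ q ∧ 2 ≤ a i
      · obtain ⟨i, hiq, hi2⟩ := h2
        refine ⟨i, hiq, by omega, fun j hj => ?_⟩
        have hj' := hA hj
        simp only [suppv, Finset.mem_filter, Finset.mem_Icc] at hj'
        unfold fvec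
        by_cases hji : j = i
        · subst hji; simp; omega
        · simp [hji]; exact hj'.2
      · push_neg at h2
        have hle : ∀ i, i ≤ q → a i ≤ 1 := fun i hi => by
          have := h2 i hi; omega
        have h0 : 1 ≤ a 0 := by
          have hsum : ∑ j ∈ Finset.range q, a (j + 1) ≤ ∑ j ∈ Finset.range q, 1 := by
            apply Finset.sum_le_sum
            intro j hj
            exact hle (j + 1) (by simpa using Finset.mem_range.mp hj)
          rw [Finset.sum_range_succ'] at hs
          simp only [Finset.sum_const, smul_eq_mul, Finset.card_range, mul_one] at hsum
          omega
        refine ⟨0, Nat.zero_le q, h0, fun j hj => ?_⟩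
        have hj' := hA hj
        simp only [suppv, Finset.mem_filter, Finset.mem_Icc] at hj'
        have : j ≠ 0 := by omega
        unfold fvec
        simp [this]
        exact hj'.2
    obtain ⟨i, hiq, hai, hAne⟩ := hexist
    have hfle : ∀ j, fvec i j ≤ a j := by
      intro j; unfold fvec; by_cases hji : j = i
      · subst hji; simpa using hai
      · simp [hji]
    refine ⟨i, hiq, hai, ⟨?_, ?_⟩, ?_, ?_⟩
    · intro j hj
      have h1 := hz j hj
      simp only [fvec]
      split <;> omega
    · rw [Finset.sum_tsub_distrib _ (fun j _ => hfle j), hs]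
      have : ∑ j ∈ Finset.range (q + 1), fvec i j = 1 := by
        unfold fvec
        rw [Finset.sum_ite_eq' (Finset.range (q + 1)) i (fun _ => 1)]
        simp [Finset.mem_range.mpr (Nat.lt_succ_of_le hiq)]
      omega
    · intro j hj
      have hj' := hA hj
      simp only [suppv, Finset.mem_filter, Finset.mem_Icc] at hj' ⊢
      exact ⟨hj'.1, hAne j hj⟩
    · have ha : a = fun j => (a j - fvec i j) + fvec i j := by
        funext j
        have := hfle j
        omega
      conv_lhs => rw [ha]
      exact cube_translate' q τ (fun j => a j - fvec i j) i A
  refine ⟨key, ?_⟩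
  ext s
  simp only [Set.mem_iUnion, Set.mem_image]
  constructor
  · rintro ⟨a, A, hN, hA, rfl⟩
    obtain ⟨i, hiq, _, hNr, hsupp, heq⟩ := key a A hN hA
    exact ⟨i, Finset.mem_range.mpr (Nat.lt_succ_of_le hiq),
      cubeSet q τ (fun j => a j - fvec i j) A, ⟨_, A, hNr, hsupp, rfl⟩, heq.symm⟩
  · rintro ⟨i, hi, s', ⟨b, B, hNb, hB, rfl⟩, rfl⟩
    have hiq : i ≤ q := Nat.lt_succ_iff.mp (Finset.mem_range.mp hi)
    refine ⟨fun j => b j + fvec i j, B, ⟨?_, ?_⟩, ?_, (cube_translate' q τ b i B).symm⟩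
    · intro j hj
      have h1 := hNb.1 j hj
      have : j ≠ i := by omega
      unfold fvec; simp [this, h1]
    · have : ∑ j ∈ Finset.range (q + 1), fvec i j = 1 := by
        unfold fvec
        rw [Finset.sum_ite_eq' (Finset.range (q + 1)) i (fun _ => 1)]
        simp [Finset.mem_range.mpr (Nat.lt_succ_of_le hiq)]
      rw [Finset.sum_add_distrib, hNb.2, this]
    · intro j hj
      have hj' := hB hj
      simp only [suppv, Finset.mem_filter, Finset.mem_Icc] at hj' ⊢
      exact ⟨hj'.1, by omega⟩
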